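/- Let A = ⟨ℤₙ, {a, b}⟩ be a standardized DFA and let s, q satisfy 0 ≤ s ≤ ℓ−1 and 0 ≤ q ≤ n−1. Then the word w = a^{s+1} b^q satisfies excl(w) = {q} and q ⊕ d_s ∈ dupl(w), where d_s = d·aˢ. In particular, w has defect 1. -/

import Mathlib

/-!
The image of `a^(s+1)` is still `{0}ᶜ`: `a` maps `{0}ᶜ` onto its whole image, because the
excluded state `0` and `r ≠ 0` have the same image. Shifting by `b^q` then excludes exactly `q`, and the collision
`a 0 = a r` survives as the duplicate `q + a^[s] (a 0)`.
-/

/-- The action of a word on a state: `true` acts as the letter `a`, `false` acts as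
the letter `b : q ↦ q + 1`. -/
def actAB (n : ℕ) (a : ZMod n → ZMod n) (q : ZMod n) (w : List Bool) : ZMod n :=
  w.foldl (fun p l => if l then a p else p + 1) q

section Iterate

variable {α : Type*} {f : α → α}

theorem Set.range_iterate_succ_of_image_range (hf : f '' Set.range f = Set.range f) (k : ℕ) :
    Set.range f^[k + 1] = Set.range f := by
  induction k with
  | zero => rfl
  | succ k ih => rw [Function.iterate_succ', Set.range_comp, ih, hf]

theorem Set.image_compl_singleton_of_apply_eq {x r : α} (hr : r ≠ x) (hxr : f r = f x) :
    f '' {x}ᶜ = Set.range f := by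
  refine (Set.image_subset_range f _).antisymm ?_
  rintro _ ⟨p, rfl⟩
  rcases eq_or_ne p x with rfl | hp
  · exact ⟨r, hr, hxr⟩
  · exact ⟨p, hp, rfl⟩

end Iterate

theorem Set.range_add_const_of_range_eq_compl_zero {α G : Type*} [AddGroup G] {g : α → G}
    (hg : Set.range g = {0}ᶜ) (c : G) :
    Set.range (fun p => g p + c) = {c}ᶜ := by
  rw [Set.range_comp' (· + c), hg, Set.image_compl_eq (AddGroup.addRight_bijective c),
    Set.image_singleton, zero_add]

section actAB

variable {n : ℕ} {a : ZMod n → ZMod n}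

theorem actAB_append (p : ZMod n) (u v : List Bool) :
    actAB n a p (u ++ v) = actAB n a (actAB n a p u) v :=
  List.foldl_append

theorem actAB_replicate_true (k : ℕ) (p : ZMod n) :
    actAB n a p (List.replicate k true) = a^[k] p := by
  induction k generalizing p with
  | zero => rfl
  | succ k ih => exact ih (a p)

theorem actAB_replicate_false (k : ℕ) (p : ZMod n) :
    actAB n a p (List.replicate k false) = p + k := by
  induction k generalizing p with
  | zero => simp [actAB]
  | succ k ih =>
    rw [Nat.cast_succ, ← add_assoc, add_right_comm]
    exact ih (p + 1)

theorem actAB_replicate_true_append_replicate_false (j k : ℕ) (p : ZMod n) :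
    actAB n a p (List.replicate j true ++ List.replicate k false) = a^[j] p + k := by
  rw [actAB_append, actAB_replicate_true, actAB_replicate_false]

end actAB

theorem stmt9_general (n : ℕ) (a : ZMod n → ZMod n)
    (hexcl : Set.range a = {(0 : ZMod n)}ᶜ)
    (r : ZMod n) (hr : r ≠ 0) (hra : a r = a 0)
    (s q : ℕ) :
    (Set.range fun p =>
        actAB n a p (List.replicate (s + 1) true ++ List.replicate q false))ᶜ
        = {(q : ZMod n)} ∧
    ((q : ZMod n) + a^[s] (a 0)) ∈
      {p : ZMod n | ∃ q₁ q₂ : ZMod n, q₁ ≠ q₂ ∧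
        actAB n a q₁ (List.replicate (s + 1) true ++ List.replicate q false) = p ∧
        actAB n a q₂ (List.replicate (s + 1) true ++ List.replicate q false) = p} := by
  simp only [actAB_replicate_true_append_replicate_false]
  have himage : a '' Set.range a = Set.range a := by
    rw [hexcl, Set.image_compl_singleton_of_apply_eq hr hra, hexcl]
  have hrange : Set.range a^[s + 1] = {0}ᶜ := by
    rw [Set.range_iterate_succ_of_image_range himage, hexcl]
  refine ⟨by rw [Set.range_add_const_of_range_eq_compl_zero hrange, compl_compl], ?_⟩
  refine ⟨0, r, hr.symm, ?_, ?_⟩ <;>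
    simp only [Function.iterate_succ_apply, hra, add_comm]

/-- In a standardized DFA, for `0 ≤ s ≤ ℓ-1` and `0 ≤ q ≤ n-1`, the word
`w = a^(s+1) b^q` satisfies `excl(w) = {q}` and `q ⊕ d_s ∈ dupl(w)`; in particular
`w` has defect 1. -/
theorem stmt9 (n : ℕ) (hn : 2 ≤ n) (a : ZMod n → ZMod n)
    (hexcl : Set.range a = {(0 : ZMod n)}ᶜ)
    (hdupl : ∀ p : ZMod n,
      (∃ q₁ q₂ : ZMod n, q₁ ≠ q₂ ∧ a q₁ = p ∧ a q₂ = p) ↔ p = a 0)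
    (r : ZMod n) (hr : r ≠ 0) (hra : a r = a 0)
    (ℓ : ℕ) (hℓ1 : 1 ≤ ℓ) (hℓr : a^[ℓ - 1] (a 0) = r)
    (hℓmin : ∀ m : ℕ, 1 ≤ m → a^[m - 1] (a 0) = r → ℓ ≤ m)
    (s q : ℕ) (hs : s < ℓ) (hq : q < n) :
    (Set.range fun p =>
        actAB n a p (List.replicate (s + 1) true ++ List.replicate q false))ᶜ
        = {(q : ZMod n)} ∧
    ((q : ZMod n) + a^[s] (a 0)) ∈
      {p : ZMod n | ∃ q₁ q₂ : ZMod n, q₁ ≠ q₂ ∧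
        actAB n a q₁ (List.replicate (s + 1) true ++ List.replicate q false) = p ∧
        actAB n a q₂ (List.replicate (s + 1) true ++ List.replicate q false) = p} :=
  stmt9_general n a hexcl r hr hra s q
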